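/- Let F be a field of characteristic different from 2, let n ≥ 4, let Q be the quadratic form on F^{n−1} given by Q(x_1, …, x_{n−1}) = x_1 x_3 − x_2² + (1/2) Σ_{i=4}^{n−1} x_i², let J = diag(J_3, I_{n−4}) ∈ GL_{n−1}(F) with J_3 the 3×3 matrix with rows (0,0,1), (0,−2,0), (1,0,0), and let φ(a) = I_{n−1} + 2a E_{2,1} + a² E_{3,1} + a E_{3,2}. Then R = {(1, v, a + Q(v); 0, φ(a), φ(a) J v^T; 0, 0, 1) : v ∈ F^{n−1}, a ∈ F} is a regular subgroup of AGL_n(F) containing no translation other than the identity, i.e., R ∩ Tr = {I_{n+1}}. -/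

import Mathlib

open Matrix

/-- `M` lies in the affine group `AGL_n(F) ≤ GL_{n+1}(F)`:
it has block form `(1 v; 0 A)`, i.e. entry `(0,0)` equals `1` and the rest of
the first column is `0`. -/
def IsAffine {F : Type*} [Field F] {n : ℕ} (M : GL (Fin (n + 1)) F) : Prop :=
  (M : Matrix (Fin (n + 1)) (Fin (n + 1)) F) 0 0 = 1 ∧
    ∀ i : Fin (n + 1), i ≠ 0 → (M : Matrix (Fin (n + 1)) (Fin (n + 1)) F) i 0 = 0

/-- `M` is a translation: it is affine with linear part `A = I_n`,
i.e. all rows other than the first agree with the identity matrix. -/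
def IsTranslation {F : Type*} [Field F] {n : ℕ} (M : GL (Fin (n + 1)) F) : Prop :=
  IsAffine M ∧ ∀ i j : Fin (n + 1), i ≠ 0 →
    (M : Matrix (Fin (n + 1)) (Fin (n + 1)) F) i j = if i = j then 1 else 0

/-- `R` is a regular subgroup of `AGL_n(F)`: all its elements are affine and for
every `v ∈ F^n` there is exactly one element of `R` with first row `(1, v)`. -/
def IsRegularAffine {F : Type*} [Field F] {n : ℕ} (R : Subgroup (GL (Fin (n + 1)) F)) : Prop :=
  (∀ M ∈ R, IsAffine M) ∧
    ∀ v : Fin n → F, ∃! M : GL (Fin (n + 1)) F, M ∈ R ∧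
      ∀ j : Fin n, (M : Matrix (Fin (n + 1)) (Fin (n + 1)) F) 0 j.succ = v j

/-- `M ∈ GL_{n+1}(F)` is unipotent: `(M - I)^{n+1} = 0`. -/
def IsUnipotent {F : Type*} [Field F] {n : ℕ} (M : GL (Fin (n + 1)) F) : Prop :=
  ((M : Matrix (Fin (n + 1)) (Fin (n + 1)) F) - 1) ^ (n + 1) = 0

/-- The quadratic form `Q(x_1, …, x_{n-1}) = x_1 x_3 - x_2² + (1/2)·Σ_{i=4}^{n-1} x_i²`
on `F^{n-1}` (indices here are 0-based). -/
def exQodd {F : Type*} [Field F] (n : ℕ) (hn : 4 ≤ n) (x : Fin (n - 1) → F) : F :=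
  x ⟨0, by omega⟩ * x ⟨2, by omega⟩ - x ⟨1, by omega⟩ ^ 2 +
    (1 / 2) * ∑ i : Fin (n - 1), (if 3 ≤ (i : ℕ) then x i ^ 2 else 0)

/-- The map `φ(a) = I_{n-1} + 2a·E_{2,1} + a²·E_{3,1} + a·E_{3,2}`
(indices here are 0-based). -/
def exPhiOdd {F : Type*} [Field F] (n : ℕ) (hn : 4 ≤ n) (a : F) :
    Matrix (Fin (n - 1)) (Fin (n - 1)) F :=
  1 + Matrix.single ⟨1, by omega⟩ ⟨0, by omega⟩ (2 * a) +
    Matrix.single ⟨2, by omega⟩ ⟨0, by omega⟩ (a ^ 2) +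
    Matrix.single ⟨2, by omega⟩ ⟨1, by omega⟩ a

/-- The Gram matrix `J = diag(J_3, I_{n-4})` of the polar form of `exQodd`, where
`J_3` has rows `(0,0,1)`, `(0,-2,0)`, `(1,0,0)` (indices here are 0-based). -/
def exJodd {F : Type*} [Field F] (n : ℕ) : Matrix (Fin (n - 1)) (Fin (n - 1)) F :=
  Matrix.of fun i j =>
    if (i : ℕ) = 0 ∧ (j : ℕ) = 2 then 1
    else if (i : ℕ) = 1 ∧ (j : ℕ) = 1 then -2
    else if (i : ℕ) = 2 ∧ (j : ℕ) = 0 then 1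
    else if 3 ≤ (i : ℕ) ∧ i = j then 1
    else 0

/-- The matrix `(1, v, a + Q(v); 0, φ(a), φ(a)Jvᵀ; 0, 0, 1)` of size `n+1`,
with blocks of sizes `1`, `n-1`, `1`. -/
def exRMatOdd {F : Type*} [Field F] (n : ℕ) (hn : 4 ≤ n)
    (v : Fin (n - 1) → F) (a : F) : Matrix (Fin (n + 1)) (Fin (n + 1)) F :=
  Matrix.of fun i j =>
    if hi0 : (i : ℕ) = 0 then
      if hj0 : (j : ℕ) = 0 then 1
      else if hjm : (j : ℕ) ≤ n - 1 then v ⟨(j : ℕ) - 1, by omega⟩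
      else a + exQodd n hn v
    else if him : (i : ℕ) ≤ n - 1 then
      if hj0 : (j : ℕ) = 0 then 0
      else if hjm : (j : ℕ) ≤ n - 1 then
        exPhiOdd n hn a ⟨(i : ℕ) - 1, by omega⟩ ⟨(j : ℕ) - 1, by omega⟩
      else ((exPhiOdd n hn a).mulVec ((exJodd n).mulVec v)) ⟨(i : ℕ) - 1, by omega⟩
    else
      if (j : ℕ) = n then 1 else 0

/-!
`R` is the image of the group `F^{n-1} ⋊ F` with law `(v, a)(w, b) = (w + v φ(b), a + b)`.
That the matrices multiply by this law rests on three facts: `φ(a) φ(b) = φ(a + b)`,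
`φ(b)` preserves the symmetric form `J` (`φ(b) J φ(b)ᵀ = J`), and `Q(x) = ½ x J xᵀ`, so that
`Q(w + v φ(b)) = Q(w) + Q(v) + v φ(b) J wᵀ`. The first row `(v, a + Q(v))` determines `(v, a)`
bijectively, which is regularity. A translation in `R` has `φ(a) = I`, forcing `a = 0`, and
`J vᵀ = 0`, forcing `v = 0` because `J` is invertible when `2 ≠ 0`.
-/

lemma Fin.sum_ite_val_eq {M : Type*} [AddCommMonoid M] {m : ℕ} (f : Fin m → M) {k : ℕ}
    (hk : k < m) : ∑ j : Fin m, (if (j : ℕ) = k then f j else 0) = f ⟨k, hk⟩ := by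
  simp_rw [← Fin.ext_iff (b := ⟨k, hk⟩)]
  simp

lemma Fin.eq_zero_or_eq_mk_succ_or_eq_last {n : ℕ} (i : Fin (n + 1)) :
    i = 0 ∨ (∃ k : Fin (n - 1), i = ⟨k + 1, by omega⟩) ∨ i = Fin.last n := by
  rcases i with ⟨_ | i, hi⟩
  · exact Or.inl rfl
  · rcases Nat.lt_or_ge i (n - 1) with h | h
    · exact Or.inr (Or.inl ⟨⟨i, h⟩, rfl⟩)
    · exact Or.inr (Or.inr (Fin.ext (by simp; omega)))

lemma Fin.sum_univ_eq_zero_add_sum_add_last {M : Type*} [AddCommMonoid M] {n : ℕ} (hn : 1 ≤ n)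
    (g : Fin (n + 1) → M) :
    ∑ i, g i = g 0 + ∑ k : Fin (n - 1), g ⟨k + 1, by omega⟩ + g (Fin.last n) := by
  obtain ⟨m, rfl⟩ : ∃ m, n = m + 1 := ⟨n - 1, by omega⟩
  rw [Fin.sum_univ_castSucc, Fin.sum_univ_succ]
  rfl

lemma dotProduct_eq_add_sum_ite {R : Type*} [CommSemiring R] {m : ℕ} (hm : 3 ≤ m)
    (x y : Fin m → R) :
    x ⬝ᵥ y = x ⟨0, by omega⟩ * y ⟨0, by omega⟩ + x ⟨1, by omega⟩ * y ⟨1, by omega⟩ +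
      x ⟨2, by omega⟩ * y ⟨2, by omega⟩ + ∑ i : Fin m, if 3 ≤ (i : ℕ) then x i * y i else 0 := by
  have split (i : Fin m) : x i * y i = (if (i : ℕ) = 0 then x i * y i else 0) +
      (if (i : ℕ) = 1 then x i * y i else 0) + (if (i : ℕ) = 2 then x i * y i else 0) +
      (if 3 ≤ (i : ℕ) then x i * y i else 0) := by
    rcases i with ⟨_ | _ | _ | i, hi⟩ <;> simp
  rw [dotProduct, Finset.sum_congr rfl fun i _ => split i, Finset.sum_add_distrib,
    Finset.sum_add_distrib, Finset.sum_add_distrib, Fin.sum_ite_val_eq _ (by omega : 0 < m),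
    Fin.sum_ite_val_eq _ (by omega : 1 < m), Fin.sum_ite_val_eq _ (by omega : 2 < m)]

lemma dotProduct_mulVec_comm_of_isSymm {R ι : Type*} [CommSemiring R] [Fintype ι]
    {A : Matrix ι ι R} (hA : A.IsSymm) (x y : ι → R) : x ⬝ᵥ A *ᵥ y = y ⬝ᵥ A *ᵥ x := by
  rw [dotProduct_mulVec, ← mulVec_transpose, hA.eq, dotProduct_comm]

lemma exJodd_isSymm {F : Type*} [Field F] (n : ℕ) :
    (exJodd n : Matrix (Fin (n - 1)) (Fin (n - 1)) F).IsSymm := by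
  ext ⟨_ | _ | _ | i, hi⟩ ⟨_ | _ | _ | j, hj⟩ <;> simp [exJodd, eq_comm]

section
variable {F : Type*} [Field F] {n : ℕ} (hn : 4 ≤ n)

lemma exPhiOdd_zero : exPhiOdd n hn (0 : F) = 1 := by
  simp [exPhiOdd]

lemma exPhiOdd_add (a b : F) :
    exPhiOdd n hn (a + b) = exPhiOdd n hn a * exPhiOdd n hn b := by
  simp only [exPhiOdd, add_mul, mul_add, one_mul, mul_one, single_mul_single_same,
    single_mul_single_of_ne, ne_eq, Fin.mk.injEq, OfNat.one_ne_ofNat,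
    OfNat.zero_ne_ofNat, zero_ne_one, not_false_eq_true, add_zero]
  rw [show (a + b) ^ 2 = a ^ 2 + b ^ 2 + a * (2 * b) by ring]
  simp only [single_add]
  abel

lemma eq_zero_of_exPhiOdd_eq_one {a : F} (h : exPhiOdd n hn a = 1) : a = 0 := by
  have h21 := congrFun₂ h ⟨2, by omega⟩ ⟨1, by omega⟩
  simp only [exPhiOdd, Matrix.add_apply, one_apply, single_apply, Fin.mk.injEq] at h21
  simpa using h21

lemma exJodd_mulVec (x : Fin (n - 1) → F) :
    exJodd n *ᵥ x = fun i : Fin (n - 1) =>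
      if (i : ℕ) = 0 then x ⟨2, by omega⟩
      else if (i : ℕ) = 1 then -2 * x ⟨1, by omega⟩
      else if (i : ℕ) = 2 then x ⟨0, by omega⟩
      else x i := by
  funext i
  simp only [mulVec, dotProduct, exJodd, of_apply, ite_mul, one_mul, zero_mul]
  rcases i with ⟨_ | _ | _ | i, hi⟩ <;>
    simp [Fin.sum_ite_val_eq _ (show 0 < n - 1 by omega),
      Fin.sum_ite_val_eq _ (show 1 < n - 1 by omega), Fin.sum_ite_val_eq _ (show 2 < n - 1 by omega)]

lemma exPhiOdd_mulVec (a : F) (x : Fin (n - 1) → F) :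
    exPhiOdd n hn a *ᵥ x = fun i : Fin (n - 1) =>
      if (i : ℕ) = 1 then x ⟨1, by omega⟩ + 2 * a * x ⟨0, by omega⟩
      else if (i : ℕ) = 2 then x ⟨2, by omega⟩ + a ^ 2 * x ⟨0, by omega⟩ + a * x ⟨1, by omega⟩
      else x i := by
  funext i
  simp only [exPhiOdd, add_mulVec, one_mulVec, single_mulVec, Pi.add_apply,
    Function.update_apply, Pi.zero_apply]
  rcases i with ⟨_ | _ | _ | i, hi⟩ <;> simp

lemma vecMul_exPhiOdd (a : F) (x : Fin (n - 1) → F) :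
    x ᵥ* exPhiOdd n hn a = fun i : Fin (n - 1) =>
      if (i : ℕ) = 0 then x ⟨0, by omega⟩ + 2 * a * x ⟨1, by omega⟩ + a ^ 2 * x ⟨2, by omega⟩
      else if (i : ℕ) = 1 then x ⟨1, by omega⟩ + a * x ⟨2, by omega⟩
      else x i := by
  funext i
  simp only [← mulVec_transpose, exPhiOdd, transpose_add, transpose_one, transpose_single,
    add_mulVec, one_mulVec, single_mulVec, Pi.add_apply, Function.update_apply, Pi.zero_apply]
  rcases i with ⟨_ | _ | _ | i, hi⟩ <;> simp

lemma exPhiOdd_mul_exJodd_mul_transpose (a : F) :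
    exPhiOdd n hn a * exJodd n * (exPhiOdd n hn a)ᵀ = exJodd n := by
  refine ext_iff_mulVec.2 fun x => funext fun i => ?_
  simp only [← mulVec_mulVec, mulVec_transpose, vecMul_exPhiOdd, exJodd_mulVec hn,
    exPhiOdd_mulVec]
  rcases i with ⟨_ | _ | _ | i, hi⟩ <;> simp <;> ring

lemma exQodd_eq_half_dotProduct (h2 : (2 : F) ≠ 0) (x : Fin (n - 1) → F) :
    exQodd n hn x = 2⁻¹ * (x ⬝ᵥ exJodd n *ᵥ x) := by
  have tail (i : Fin (n - 1)) : (if 3 ≤ (i : ℕ) then x i * (exJodd n *ᵥ x) i else 0) =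
      if 3 ≤ (i : ℕ) then x i ^ 2 else 0 := by
    split_ifs with hi
    · simp only [exJodd_mulVec hn, if_neg (show (i : ℕ) ≠ 0 by omega),
        if_neg (show (i : ℕ) ≠ 1 by omega), if_neg (show (i : ℕ) ≠ 2 by omega), sq]
    · rfl
  rw [dotProduct_eq_add_sum_ite (show 3 ≤ n - 1 by omega), Finset.sum_congr rfl fun i _ => tail i,
    exJodd_mulVec hn]
  simp only [exQodd, one_div, ↓reduceIte, one_ne_zero, neg_mul, mul_neg, OfNat.ofNat_ne_zero,
    OfNat.ofNat_ne_one]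
  field_simp
  ring

lemma exQodd_add_vecMul_exPhiOdd (h2 : (2 : F) ≠ 0) (a : F) (v w : Fin (n - 1) → F) :
    exQodd n hn (w + v ᵥ* exPhiOdd n hn a) =
      exQodd n hn w + exQodd n hn v + v ⬝ᵥ exPhiOdd n hn a *ᵥ exJodd n *ᵥ w := by
  have isometry : (v ᵥ* exPhiOdd n hn a) ⬝ᵥ exJodd n *ᵥ (v ᵥ* exPhiOdd n hn a) =
      v ⬝ᵥ exJodd n *ᵥ v := by
    rw [← dotProduct_mulVec, ← mulVec_transpose, mulVec_mulVec, mulVec_mulVec,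
      exPhiOdd_mul_exJodd_mul_transpose]
  simp only [exQodd_eq_half_dotProduct hn h2, mulVec_add, dotProduct_add, add_dotProduct,
    dotProduct_mulVec_comm_of_isSymm (exJodd_isSymm n) w, isometry, ← dotProduct_mulVec]
  field_simp
  ring

end

lemma eq_zero_of_exJodd_mulVec_eq_zero {F : Type*} [Field F] {n : ℕ} (hn : 4 ≤ n)
    (h2 : (2 : F) ≠ 0) {v : Fin (n - 1) → F} (h : exJodd n *ᵥ v = 0) : v = 0 := by
  funext i
  rcases i with ⟨_ | _ | _ | i, hi⟩
  · simpa [exJodd_mulVec hn] using congrFun h ⟨2, by omega⟩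
  · simpa [exJodd_mulVec hn, h2] using congrFun h ⟨1, by omega⟩
  · simpa [exJodd_mulVec hn] using congrFun h ⟨0, by omega⟩
  · simpa [exJodd_mulVec hn] using congrFun h ⟨i + 3, by omega⟩

section
variable {F : Type*} [Field F] {n : ℕ} (hn : 4 ≤ n) (v : Fin (n - 1) → F) (a : F)

@[simp]
lemma exRMatOdd_apply_zero_zero : exRMatOdd n hn v a 0 0 = 1 := by
  simp [exRMatOdd]

@[simp]
lemma exRMatOdd_apply_zero_succ (l : Fin (n - 1)) :
    exRMatOdd n hn v a 0 ⟨l + 1, by omega⟩ = v l := by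
  simp [exRMatOdd]

@[simp]
lemma exRMatOdd_apply_zero_last : exRMatOdd n hn v a 0 (Fin.last n) = a + exQodd n hn v := by
  simp [exRMatOdd, show n ≠ 0 by omega, show ¬n ≤ n - 1 by omega]

@[simp]
lemma exRMatOdd_apply_succ_zero (k : Fin (n - 1)) :
    exRMatOdd n hn v a ⟨k + 1, by omega⟩ 0 = 0 := by
  simp [exRMatOdd]

@[simp]
lemma exRMatOdd_apply_succ_succ (k l : Fin (n - 1)) :
    exRMatOdd n hn v a ⟨k + 1, by omega⟩ ⟨l + 1, by omega⟩ = exPhiOdd n hn a k l := by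
  simp [exRMatOdd]

@[simp]
lemma exRMatOdd_apply_succ_last (k : Fin (n - 1)) :
    exRMatOdd n hn v a ⟨k + 1, by omega⟩ (Fin.last n) = (exPhiOdd n hn a *ᵥ exJodd n *ᵥ v) k := by
  simp [exRMatOdd, show n ≠ 0 by omega, show ¬n ≤ n - 1 by omega]

@[simp]
lemma exRMatOdd_apply_last_zero : exRMatOdd n hn v a (Fin.last n) 0 = 0 := by
  simp [exRMatOdd, show n ≠ 0 by omega, show ¬n ≤ n - 1 by omega, show 0 ≠ n by omega]

@[simp]
lemma exRMatOdd_apply_last_succ (l : Fin (n - 1)) :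
    exRMatOdd n hn v a (Fin.last n) ⟨l + 1, by omega⟩ = 0 := by
  simp [exRMatOdd, show n ≠ 0 by omega, show ¬n ≤ n - 1 by omega, show (l : ℕ) + 1 ≠ n by omega]

@[simp]
lemma exRMatOdd_apply_last_last : exRMatOdd n hn v a (Fin.last n) (Fin.last n) = 1 := by
  simp [exRMatOdd, show n ≠ 0 by omega, show ¬n ≤ n - 1 by omega]

end

section
variable {F : Type*} [Field F] {n : ℕ} (hn : 4 ≤ n)

lemma exRMatOdd_zero : exRMatOdd n hn (0 : Fin (n - 1) → F) 0 = 1 := by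
  ext i j
  rcases Fin.eq_zero_or_eq_mk_succ_or_eq_last i with rfl | ⟨k, rfl⟩ | rfl <;>
    rcases Fin.eq_zero_or_eq_mk_succ_or_eq_last j with rfl | ⟨l, rfl⟩ | rfl <;>
    simp [exPhiOdd_zero hn, exQodd, one_apply, Fin.ext_iff] <;> omega

lemma exRMatOdd_mul (h2 : (2 : F) ≠ 0) (v w : Fin (n - 1) → F) (a b : F) :
    exRMatOdd n hn v a * exRMatOdd n hn w b =
      exRMatOdd n hn (w + v ᵥ* exPhiOdd n hn b) (a + b) := by
  ext i j
  rw [mul_apply, Fin.sum_univ_eq_zero_add_sum_add_last (by omega)]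
  rcases Fin.eq_zero_or_eq_mk_succ_or_eq_last i with rfl | ⟨k, rfl⟩ | rfl <;>
    rcases Fin.eq_zero_or_eq_mk_succ_or_eq_last j with rfl | ⟨l, rfl⟩ | rfl <;>
    simp only [exRMatOdd_apply_zero_zero, exRMatOdd_apply_zero_succ, exRMatOdd_apply_zero_last,
      exRMatOdd_apply_succ_zero, exRMatOdd_apply_succ_succ, exRMatOdd_apply_succ_last,
      exRMatOdd_apply_last_zero, exRMatOdd_apply_last_succ, exRMatOdd_apply_last_last,
      mul_zero, zero_mul, mul_one, one_mul, add_zero, zero_add, Finset.sum_const_zero]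
  · rfl
  · change _ + v ⬝ᵥ _ + _ = _
    rw [exQodd_add_vecMul_exPhiOdd hn h2]
    ring
  · rw [← mul_apply, exPhiOdd_add]
  · change (exPhiOdd n hn a *ᵥ _) k + _ = _
    have isometry (x : Fin (n - 1) → F) : exPhiOdd n hn (a + b) *ᵥ exJodd n *ᵥ
        (x ᵥ* exPhiOdd n hn b) = exPhiOdd n hn a *ᵥ exJodd n *ᵥ x := by
      rw [← mulVec_transpose, mulVec_mulVec, mulVec_mulVec, exPhiOdd_add, mul_assoc, mul_assoc,
        ← mul_assoc (exPhiOdd n hn b), exPhiOdd_mul_exJodd_mul_transpose, mulVec_mulVec]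
    rw [mulVec_add, mulVec_add, isometry, exPhiOdd_add, ← mulVec_mulVec]
    rfl

lemma exRMatOdd_mul_exRMatOdd_neg (h2 : (2 : F) ≠ 0) (v : Fin (n - 1) → F) (a : F) :
    exRMatOdd n hn v a * exRMatOdd n hn (-(v ᵥ* exPhiOdd n hn (-a))) (-a) = 1 := by
  rw [exRMatOdd_mul hn h2, neg_add_cancel, add_neg_cancel, exRMatOdd_zero]

def exRMatOddUnit (h2 : (2 : F) ≠ 0) (v : Fin (n - 1) → F) (a : F) : GL (Fin (n + 1)) F where
  val := exRMatOdd n hn v a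
  inv := exRMatOdd n hn (-(v ᵥ* exPhiOdd n hn (-a))) (-a)
  val_inv := exRMatOdd_mul_exRMatOdd_neg hn h2 v a
  inv_val := mul_eq_one_comm.1 (exRMatOdd_mul_exRMatOdd_neg hn h2 v a)

def exROdd (h2 : (2 : F) ≠ 0) : Subgroup (GL (Fin (n + 1)) F) where
  carrier := {M | ∃ v a, (M : Matrix (Fin (n + 1)) (Fin (n + 1)) F) = exRMatOdd n hn v a}
  one_mem' := ⟨0, 0, (exRMatOdd_zero hn).symm⟩
  mul_mem' := by
    rintro M N ⟨v, a, hM⟩ ⟨w, b, hN⟩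
    exact ⟨_, _, by rw [Units.val_mul, hM, hN, exRMatOdd_mul hn h2]⟩
  inv_mem' := by
    rintro M ⟨v, a, hM⟩
    refine ⟨-(v ᵥ* exPhiOdd n hn (-a)), -a, Units.inv_eq_of_mul_eq_one_right ?_⟩
    rw [hM, exRMatOdd_mul_exRMatOdd_neg hn h2]

lemma isAffine_of_mem_exROdd (h2 : (2 : F) ≠ 0) {M : GL (Fin (n + 1)) F}
    (hM : M ∈ exROdd hn h2) : IsAffine M := by
  obtain ⟨v, a, hM⟩ := hM
  refine ⟨by rw [hM, exRMatOdd_apply_zero_zero], fun i hi => ?_⟩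
  rcases Fin.eq_zero_or_eq_mk_succ_or_eq_last i with rfl | ⟨k, rfl⟩ | rfl
  · exact absurd rfl hi
  · rw [hM, exRMatOdd_apply_succ_zero]
  · rw [hM, exRMatOdd_apply_last_zero]

lemma exRMatOdd_apply_zero_fin_succ (v : Fin (n - 1) → F) (a : F) (j : Fin n) :
    exRMatOdd n hn v a 0 j.succ = if h : (j : ℕ) < n - 1 then v ⟨j, h⟩ else a + exQodd n hn v := by
  simp [exRMatOdd]

lemma exRMatOdd_firstRow_injective :
    Function.Injective fun p : (Fin (n - 1) → F) × F => fun j : Fin n =>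
      exRMatOdd n hn p.1 p.2 0 j.succ := by
  rintro ⟨v, a⟩ ⟨w, b⟩ h
  simp only [funext_iff, exRMatOdd_apply_zero_fin_succ] at h
  obtain rfl : v = w := funext fun k => by simpa using h ⟨k, by omega⟩
  simpa using h ⟨n - 1, by omega⟩

lemma exRMatOdd_firstRow_surjective :
    Function.Surjective fun p : (Fin (n - 1) → F) × F => fun j : Fin n =>
      exRMatOdd n hn p.1 p.2 0 j.succ := by
  intro x
  refine ⟨(fun k => x ⟨k, by omega⟩, x ⟨n - 1, by omega⟩ - exQodd n hn fun k => x ⟨k, by omega⟩),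
    funext fun j => ?_⟩
  simp only [exRMatOdd_apply_zero_fin_succ]
  split_ifs with hj
  · rfl
  · rw [show j = ⟨n - 1, by omega⟩ from Fin.ext (by simp only; omega), sub_add_cancel]

lemma isRegularAffine_exROdd (h2 : (2 : F) ≠ 0) : IsRegularAffine (exROdd hn h2) := by
  refine ⟨fun M => isAffine_of_mem_exROdd hn h2, fun x => ?_⟩
  obtain ⟨⟨v, a⟩, hva⟩ := exRMatOdd_firstRow_surjective hn x
  refine ⟨exRMatOddUnit hn h2 v a, ⟨⟨v, a, rfl⟩, congrFun hva⟩, ?_⟩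
  rintro N ⟨⟨w, b, hN⟩, hrow⟩
  have hrow' : (fun j : Fin n => exRMatOdd n hn w b 0 j.succ) = x :=
    funext fun j => by rw [← hrow, hN]
  obtain ⟨rfl, rfl⟩ := Prod.ext_iff.1 <|
    exRMatOdd_firstRow_injective hn (a₁ := (w, b)) (a₂ := (v, a)) (hrow'.trans hva.symm)
  exact Units.ext hN

lemma eq_one_of_mem_exROdd_of_isTranslation (h2 : (2 : F) ≠ 0) {M : GL (Fin (n + 1)) F}
    (hM : M ∈ exROdd hn h2) (htr : IsTranslation M) : M = 1 := by
  obtain ⟨v, a, hM⟩ := hM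
  have hlin (k l : Fin (n - 1)) : exPhiOdd n hn a k l = (1 : Matrix _ _ F) k l := by
    have := htr.2 ⟨k + 1, by omega⟩ ⟨l + 1, by omega⟩ (by simp [Fin.ext_iff])
    rw [hM, exRMatOdd_apply_succ_succ] at this
    simp [this, one_apply, Fin.ext_iff]
  have hcol (k : Fin (n - 1)) : (exPhiOdd n hn a *ᵥ exJodd n *ᵥ v) k = 0 := by
    have := htr.2 ⟨k + 1, by omega⟩ (Fin.last n) (by simp [Fin.ext_iff])
    rw [hM, exRMatOdd_apply_succ_last] at this
    rw [this, if_neg (by simp [Fin.ext_iff]; omega)]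
  obtain rfl : a = 0 := eq_zero_of_exPhiOdd_eq_one hn (ext hlin)
  obtain rfl : v = 0 := eq_zero_of_exJodd_mulVec_eq_zero hn h2 <| funext fun k => by
    simpa [exPhiOdd_zero hn] using hcol k
  exact Units.ext (hM.trans (exRMatOdd_zero hn))

end

theorem exRMatOdd_regular_no_translations {F : Type*} [Field F]
    (hchar : ringChar F ≠ 2) (n : ℕ) (hn : 4 ≤ n) :
    ∃ R : Subgroup (GL (Fin (n + 1)) F),
      (∀ M : GL (Fin (n + 1)) F,
          M ∈ R ↔ ∃ (v : Fin (n - 1) → F) (a : F),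
            (M : Matrix (Fin (n + 1)) (Fin (n + 1)) F) = exRMatOdd n hn v a) ∧
      IsRegularAffine R ∧
      ∀ M ∈ R, IsTranslation M → M = 1 := by
  have h2 : (2 : F) ≠ 0 := Ring.two_ne_zero hchar
  exact ⟨exROdd hn h2, fun _ => Iff.rfl, isRegularAffine_exROdd hn h2,
    fun _ => eq_one_of_mem_exROdd_of_isTranslation hn h2⟩
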